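/- arXiv:0902.4899 — 3 statements merged into one kernel-verified Lean document; each statement's English description precedes it below -/
import Mathlib

section
/- For n = 2 and every m ≥ 2, the lower central series of the free algebra satisfies L_{m+1} = [x_1, L_m] + [x_2, L_m] + [x_1 x_2, L_m] + L_{m+2}; i.e. B_{m+1} = [x_1, B_m] + [x_2, B_m] + [x_1x_2, B_m]. -/
/-- The lower central series of the free algebra `A_n = FreeAlgebra ℂ (Fin n)`,
as a chain of `ℂ`-subspaces: `lcs n 1 = A`, `lcs n (m+1) = span {[a,w] : a ∈ A, w ∈ lcs n m}`.
(The value at `0` is junk, set to `⊤`.) -/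
def lcs (n : ℕ) : ℕ → Submodule ℂ (FreeAlgebra ℂ (Fin n))
  | 0 => ⊤
  | 1 => ⊤
  | m + 2 => Submodule.span ℂ
      {y | ∃ a w, w ∈ lcs n (m + 1) ∧ y = a * w - w * a}

/-- For `g ∈ A` and a `ℂ`-subspace `V ⊆ A`, `[g, V] = span {[g,w] : w ∈ V}`. -/
def brS {n : ℕ} (g : FreeAlgebra ℂ (Fin n)) (V : Submodule ℂ (FreeAlgebra ℂ (Fin n))) :
    Submodule ℂ (FreeAlgebra ℂ (Fin n)) :=
  Submodule.span ℂ {y | ∃ w ∈ V, y = g * w - w * g}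

/-!
Write `M_j = A · L_j`; for `j ≥ 1` it is a two-sided ideal, since `[L_j, A] ⊆ L_{j+1} ⊆ L_j`.
The theorem is proved together with `[A, M_{k+1}] ⊆ L_{k+2}`, by induction on `k`.
Let `B = [x₁, L_{k+2}] + [x₂, L_{k+2}] + [x₁x₂, L_{k+2}] + L_{k+4}` and `w ∈ M_{k+1}`.
From `p[c,w] + c[p,w] = [pc,w] + [c,[p,w]]`, the element `[g, p[c,w]]` is antisymmetric in `p, c`
modulo `B` whenever `[g, L_{k+2}] ⊆ B`; over `ℂ` it therefore lies in `B` when `p = c`. Since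
`[cd, w] = [c, dw] + [d, wc]`, it suffices to take `p, c` among the generators, and this leaves
only `[g, x₁[x₂,w]]` for `g = x₁, x₂`, which follows from
`[x₁, x₂z] + [x₂, x₁z] = [x₁x₂, z] + [x₂, [x₁, z]]`. The same derivation rule extends
`[xᵢ, M_{k+2}] ⊆ B` to `[A, M_{k+2}] ⊆ B`, and `B ⊆ L_{k+3}` closes the induction.
-/

open FreeAlgebra

theorem FreeAlgebra.lie_mem_of_forall_lie_ι {R X : Type*} [CommRing R]
    {U : Submodule R (FreeAlgebra R X)} {I : Set (FreeAlgebra R X)}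
    (hl : ∀ p, ∀ w ∈ I, p * w ∈ I) (hr : ∀ w ∈ I, ∀ q, w * q ∈ I)
    (h : ∀ i, ∀ w ∈ I, ⁅ι R (i : X), w⁆ ∈ U) (c : FreeAlgebra R X) :
    ∀ w ∈ I, ⁅c, w⁆ ∈ U := by
  induction c using FreeAlgebra.induction with
  | grade0 r => simp [Ring.lie_def, Algebra.commutes]
  | grade1 i => exact h i
  | add c d hc hd =>
    intro w hw
    have hcd : ⁅c + d, w⁆ = ⁅c, w⁆ + ⁅d, w⁆ := by noncomm_ring [Ring.lie_def]
    rw [hcd]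
    exact add_mem (hc w hw) (hd w hw)
  | mul c d hc hd =>
    intro w hw
    have hcd : ⁅c * d, w⁆ = ⁅c, d * w⁆ + ⁅d, w * c⁆ := by noncomm_ring [Ring.lie_def]
    rw [hcd]
    exact add_mem (hc _ (hl d w hw)) (hd _ (hr w hw c))

section LowerCentralSeries

variable {n : ℕ}

theorem lie_mem_lcs {j : ℕ} (a : FreeAlgebra ℂ (Fin n)) {w : FreeAlgebra ℂ (Fin n)}
    (hw : w ∈ lcs n (j + 1)) : ⁅a, w⁆ ∈ lcs n (j + 2) :=
  Submodule.subset_span ⟨a, w, hw, Ring.lie_def a w⟩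

theorem lcs_add_two_le {j : ℕ} {U : Submodule ℂ (FreeAlgebra ℂ (Fin n))}
    (h : ∀ a : FreeAlgebra ℂ (Fin n), ∀ w ∈ lcs n (j + 1), ⁅a, w⁆ ∈ U) : lcs n (j + 2) ≤ U :=
  Submodule.span_le.2 fun _ ⟨a, w, hw, hy⟩ => by rw [hy, ← Ring.lie_def]; exact h a w hw

theorem lcs_succ_le : ∀ j, lcs n (j + 1) ≤ lcs n j
  | 0 => le_top
  | 1 => le_top
  | j + 2 => lcs_add_two_le fun a _ hw => lie_mem_lcs a (lcs_succ_le (j + 1) hw)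

theorem lie_mem_brS (g : FreeAlgebra ℂ (Fin n)) {V : Submodule ℂ (FreeAlgebra ℂ (Fin n))}
    {w : FreeAlgebra ℂ (Fin n)} (hw : w ∈ V) : ⁅g, w⁆ ∈ brS g V :=
  Submodule.subset_span ⟨w, hw, Ring.lie_def g w⟩

theorem brS_le {g : FreeAlgebra ℂ (Fin n)} {V U : Submodule ℂ (FreeAlgebra ℂ (Fin n))}
    (h : ∀ w ∈ V, ⁅g, w⁆ ∈ U) : brS g V ≤ U :=
  Submodule.span_le.2 fun _ ⟨w, hw, hy⟩ => by rw [hy, ← Ring.lie_def]; exact h w hw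

def lcsIdeal (n j : ℕ) : Submodule ℂ (FreeAlgebra ℂ (Fin n)) := ⊤ * lcs n j

theorem lcs_le_lcsIdeal (j : ℕ) : lcs n j ≤ lcsIdeal n j := fun w hw =>
  one_mul w ▸ Submodule.mul_mem_mul Submodule.mem_top hw

theorem mul_mem_lcsIdeal_left {j : ℕ} (p : FreeAlgebra ℂ (Fin n)) {v : FreeAlgebra ℂ (Fin n)}
    (hv : v ∈ lcsIdeal n j) : p * v ∈ lcsIdeal n j := by
  refine (Submodule.mul_le (P := (lcsIdeal n j).comap (LinearMap.mulLeft ℂ p))).2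
    (fun a _ w hw => ?_) hv
  rw [Submodule.mem_comap, LinearMap.mulLeft_apply, ← mul_assoc]
  exact Submodule.mul_mem_mul Submodule.mem_top hw

theorem mul_mem_lcsIdeal_right {j : ℕ} {v : FreeAlgebra ℂ (Fin n)}
    (hv : v ∈ lcsIdeal n (j + 1)) (q : FreeAlgebra ℂ (Fin n)) : v * q ∈ lcsIdeal n (j + 1) := by
  refine (Submodule.mul_le (P := (lcsIdeal n (j + 1)).comap (LinearMap.mulRight ℂ q))).2
    (fun p _ w hw => ?_) hv
  have hqw : ⁅q, w⁆ ∈ lcs n (j + 1) := lcs_succ_le _ (lie_mem_lcs q hw)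
  have hsplit : p * w * q = (p * q) * w - p * ⁅q, w⁆ := by noncomm_ring [Ring.lie_def]
  rw [Submodule.mem_comap, LinearMap.mulRight_apply, hsplit]
  exact sub_mem (Submodule.mul_mem_mul Submodule.mem_top hw)
    (Submodule.mul_mem_mul Submodule.mem_top hqw)

end LowerCentralSeries

local notation "x₁" => ι ℂ (0 : Fin 2)
local notation "x₂" => ι ℂ (1 : Fin 2)

def genBrackets (m : ℕ) : Submodule ℂ (FreeAlgebra ℂ (Fin 2)) :=
  brS x₁ (lcs 2 m) + brS x₂ (lcs 2 m) + brS (x₁ * x₂) (lcs 2 m) + lcs 2 (m + 2)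

section GenBrackets

variable {m : ℕ} {z : FreeAlgebra ℂ (Fin 2)}

theorem lie_ι_mem_genBrackets (i : Fin 2) : ∀ z ∈ lcs 2 m, ⁅ι ℂ i, z⁆ ∈ genBrackets m := by
  intro z hz
  fin_cases i
  · exact Submodule.mem_sup_left <| Submodule.mem_sup_left <| Submodule.mem_sup_left <|
      lie_mem_brS _ hz
  · exact Submodule.mem_sup_left <| Submodule.mem_sup_left <| Submodule.mem_sup_right <|
      lie_mem_brS _ hz

theorem lcs_le_genBrackets (m : ℕ) : lcs 2 (m + 2) ≤ genBrackets m := le_sup_right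

theorem lie_x₁_mul_add_lie_x₂_mul_mem_genBrackets {j : ℕ} (hz : z ∈ lcs 2 (j + 1)) :
    ⁅x₁, x₂ * z⁆ + ⁅x₂, x₁ * z⁆ ∈ genBrackets (j + 1) := by
  have key : ⁅x₁, x₂ * z⁆ + ⁅x₂, x₁ * z⁆ = ⁅x₁ * x₂, z⁆ + ⁅x₂, ⁅x₁, z⁆⁆ := by
    noncomm_ring [Ring.lie_def]
  rw [key]
  exact add_mem (Submodule.mem_sup_left <| Submodule.mem_sup_right <| lie_mem_brS _ hz)
    (lcs_le_genBrackets _ <| lie_mem_lcs _ <| lie_mem_lcs _ hz)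

theorem genBrackets_le_lcs (j : ℕ) : genBrackets (j + 1) ≤ lcs 2 (j + 2) := by
  have hbr (g : FreeAlgebra ℂ (Fin 2)) : brS g (lcs 2 (j + 1)) ≤ lcs 2 (j + 2) :=
    brS_le fun _ hw => lie_mem_lcs g hw
  exact sup_le (sup_le (sup_le (hbr _) (hbr _)) (hbr _)) (lcs_succ_le _)

end GenBrackets

section InductionStep

variable {k : ℕ} {g : FreeAlgebra ℂ (Fin 2)} {w : FreeAlgebra ℂ (Fin 2)}

theorem lie_mul_lie_add_lie_mul_lie_mem_genBrackets
    (hK : ∀ a : FreeAlgebra ℂ (Fin 2), ∀ v ∈ lcsIdeal 2 (k + 1), ⁅a, v⁆ ∈ lcs 2 (k + 2))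
    (hg : ∀ z ∈ lcs 2 (k + 2), ⁅g, z⁆ ∈ genBrackets (k + 2)) (p c : FreeAlgebra ℂ (Fin 2))
    (hw : w ∈ lcsIdeal 2 (k + 1)) :
    ⁅g, p * ⁅c, w⁆⁆ + ⁅g, c * ⁅p, w⁆⁆ ∈ genBrackets (k + 2) := by
  have key : ⁅g, p * ⁅c, w⁆⁆ + ⁅g, c * ⁅p, w⁆⁆ = ⁅g, ⁅p * c, w⁆⁆ + ⁅g, ⁅c, ⁅p, w⁆⁆⁆ := by
    noncomm_ring [Ring.lie_def]
  rw [key]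
  exact add_mem (hg _ (hK _ w hw))
    (lcs_le_genBrackets _ <| lie_mem_lcs _ <| lie_mem_lcs _ <| hK p w hw)

theorem lie_mul_lie_self_mem_genBrackets
    (hK : ∀ a : FreeAlgebra ℂ (Fin 2), ∀ v ∈ lcsIdeal 2 (k + 1), ⁅a, v⁆ ∈ lcs 2 (k + 2))
    (hg : ∀ z ∈ lcs 2 (k + 2), ⁅g, z⁆ ∈ genBrackets (k + 2)) (c : FreeAlgebra ℂ (Fin 2))
    (hw : w ∈ lcsIdeal 2 (k + 1)) : ⁅g, c * ⁅c, w⁆⁆ ∈ genBrackets (k + 2) := by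
  have h2 := lie_mul_lie_add_lie_mul_lie_mem_genBrackets hK hg c c hw
  rw [← two_smul ℂ] at h2
  exact (Submodule.smul_mem_iff _ two_ne_zero).1 h2

theorem lie_mul_lie_mem_genBrackets_of_lie_x₁_mul_lie_x₂
    (hK : ∀ a : FreeAlgebra ℂ (Fin 2), ∀ v ∈ lcsIdeal 2 (k + 1), ⁅a, v⁆ ∈ lcs 2 (k + 2))
    (hg : ∀ z ∈ lcs 2 (k + 2), ⁅g, z⁆ ∈ genBrackets (k + 2))
    (h₁₂ : ∀ w ∈ lcsIdeal 2 (k + 1), ⁅g, x₁ * ⁅x₂, w⁆⁆ ∈ genBrackets (k + 2))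
    (p c : FreeAlgebra ℂ (Fin 2)) (hw : w ∈ lcsIdeal 2 (k + 1)) :
    ⁅g, p * ⁅c, w⁆⁆ ∈ genBrackets (k + 2) := by
  have hl (p : FreeAlgebra ℂ (Fin 2)) := @mul_mem_lcsIdeal_left 2 (k + 1) p
  have hr (w : FreeAlgebra ℂ (Fin 2)) := @mul_mem_lcsIdeal_right 2 k w
  have hιι (i j : Fin 2) :
      ∀ w ∈ lcsIdeal 2 (k + 1), ⁅g, ι ℂ i * ⁅ι ℂ j, w⁆⁆ ∈ genBrackets (k + 2) := by
    intro w hw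
    revert i j
    simp only [Fin.forall_fin_two]
    refine ⟨⟨lie_mul_lie_self_mem_genBrackets hK hg _ hw, h₁₂ w hw⟩,
      ?_, lie_mul_lie_self_mem_genBrackets hK hg _ hw⟩
    simpa using sub_mem (lie_mul_lie_add_lie_mul_lie_mem_genBrackets hK hg x₂ x₁ hw) (h₁₂ w hw)
  have hιp (i : Fin 2) (p : FreeAlgebra ℂ (Fin 2)) :
      ∀ w ∈ lcsIdeal 2 (k + 1), ⁅g, ι ℂ i * ⁅p, w⁆⁆ ∈ genBrackets (k + 2) :=
    lie_mem_of_forall_lie_ι (U := (genBrackets (k + 2)).comap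
      ((LinearMap.mulLeft ℂ g - LinearMap.mulRight ℂ g) ∘ₗ LinearMap.mulLeft ℂ (ι ℂ i)))
      hl hr (hιι i) p
  have hpι (p : FreeAlgebra ℂ (Fin 2)) (i : Fin 2) :
      ∀ w ∈ lcsIdeal 2 (k + 1), ⁅g, p * ⁅ι ℂ i, w⁆⁆ ∈ genBrackets (k + 2) := fun w hw => by
    simpa using sub_mem (lie_mul_lie_add_lie_mul_lie_mem_genBrackets hK hg p (ι ℂ i) hw)
      (hιp i p w hw)
  exact lie_mem_of_forall_lie_ι (U := (genBrackets (k + 2)).comap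
      ((LinearMap.mulLeft ℂ g - LinearMap.mulRight ℂ g) ∘ₗ LinearMap.mulLeft ℂ p))
      hl hr (hpι p) c w hw

theorem lie_x₁_x₁_mul_lie_x₂_mem_genBrackets
    (hK : ∀ a : FreeAlgebra ℂ (Fin 2), ∀ v ∈ lcsIdeal 2 (k + 1), ⁅a, v⁆ ∈ lcs 2 (k + 2))
    (hw : w ∈ lcsIdeal 2 (k + 1)) : ⁅x₁, x₁ * ⁅x₂, w⁆⁆ ∈ genBrackets (k + 2) := by
  have hx₁ := lie_ι_mem_genBrackets (m := k + 2) 0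
  have hx₂ := lie_ι_mem_genBrackets (m := k + 2) 1
  have h₂₁ : ⁅x₁, x₂ * ⁅x₁, w⁆⁆ ∈ genBrackets (k + 2) := by
    simpa using sub_mem (lie_x₁_mul_add_lie_x₂_mul_mem_genBrackets (hK x₁ w hw))
      (lie_mul_lie_self_mem_genBrackets hK hx₂ x₁ hw)
  simpa using sub_mem (lie_mul_lie_add_lie_mul_lie_mem_genBrackets hK hx₁ x₁ x₂ hw) h₂₁

theorem lie_x₂_x₁_mul_lie_x₂_mem_genBrackets
    (hK : ∀ a : FreeAlgebra ℂ (Fin 2), ∀ v ∈ lcsIdeal 2 (k + 1), ⁅a, v⁆ ∈ lcs 2 (k + 2))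
    (hw : w ∈ lcsIdeal 2 (k + 1)) : ⁅x₂, x₁ * ⁅x₂, w⁆⁆ ∈ genBrackets (k + 2) := by
  simpa using sub_mem (lie_x₁_mul_add_lie_x₂_mul_mem_genBrackets (hK x₂ w hw))
    (lie_mul_lie_self_mem_genBrackets hK (lie_ι_mem_genBrackets 0) x₂ hw)

theorem lie_mem_genBrackets_of_mem_lcsIdeal
    (hK : ∀ a : FreeAlgebra ℂ (Fin 2), ∀ v ∈ lcsIdeal 2 (k + 1), ⁅a, v⁆ ∈ lcs 2 (k + 2))
    (a : FreeAlgebra ℂ (Fin 2)) {v : FreeAlgebra ℂ (Fin 2)} (hv : v ∈ lcsIdeal 2 (k + 2)) :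
    ⁅a, v⁆ ∈ genBrackets (k + 2) := by
  have hgen (i : Fin 2) (p c : FreeAlgebra ℂ (Fin 2)) {w : FreeAlgebra ℂ (Fin 2)}
      (hw : w ∈ lcsIdeal 2 (k + 1)) : ⁅ι ℂ i, p * ⁅c, w⁆⁆ ∈ genBrackets (k + 2) := by
    refine lie_mul_lie_mem_genBrackets_of_lie_x₁_mul_lie_x₂ hK (lie_ι_mem_genBrackets i) ?_ p c hw
    fin_cases i
    · exact fun w hw => lie_x₁_x₁_mul_lie_x₂_mem_genBrackets hK hw
    · exact fun w hw => lie_x₂_x₁_mul_lie_x₂_mem_genBrackets hK hw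
  refine lie_mem_of_forall_lie_ι (fun p _ => mul_mem_lcsIdeal_left p)
    (fun _ hw => mul_mem_lcsIdeal_right hw) (fun i v hv => ?_) a v hv
  refine (Submodule.mul_le (P := (genBrackets (k + 2)).comap
    (LinearMap.mulLeft ℂ (ι ℂ i) - LinearMap.mulRight ℂ (ι ℂ i)))).2 (fun p _ u hu => ?_) hv
  exact (lcs_add_two_le (U := (genBrackets (k + 2)).comap
    ((LinearMap.mulLeft ℂ (ι ℂ i) - LinearMap.mulRight ℂ (ι ℂ i)) ∘ₗ LinearMap.mulLeft ℂ p))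
    fun c w hw => hgen i p c (lcs_le_lcsIdeal _ hw)) hu

end InductionStep

theorem lie_mem_lcs_of_mem_lcsIdeal (k : ℕ) (a : FreeAlgebra ℂ (Fin 2))
    {v : FreeAlgebra ℂ (Fin 2)} (hv : v ∈ lcsIdeal 2 (k + 1)) : ⁅a, v⁆ ∈ lcs 2 (k + 2) := by
  induction k generalizing a v with
  | zero => exact lie_mem_lcs a Submodule.mem_top
  | succ k ih => exact genBrackets_le_lcs (k + 1) (lie_mem_genBrackets_of_mem_lcsIdeal ih a hv)

/-- for `n = 2` and `m ≥ 2`,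
`L_{m+1} = [x_1, L_m] + [x_2, L_m] + [x_1 x_2, L_m] + L_{m+2}`. -/
theorem stmt_3 (m : ℕ) (hm : 2 ≤ m) :
    lcs 2 (m + 1) =
      brS (FreeAlgebra.ι ℂ (0 : Fin 2)) (lcs 2 m)
      + brS (FreeAlgebra.ι ℂ (1 : Fin 2)) (lcs 2 m)
      + brS (FreeAlgebra.ι ℂ (0 : Fin 2) * FreeAlgebra.ι ℂ (1 : Fin 2)) (lcs 2 m)
      + lcs 2 (m + 2) := by
  obtain ⟨k, rfl⟩ : ∃ k, m = k + 2 := ⟨m - 2, by omega⟩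
  refine le_antisymm (lcs_add_two_le fun a w hw => ?_) (genBrackets_le_lcs (k + 1))
  exact lie_mem_genBrackets_of_mem_lcsIdeal (lie_mem_lcs_of_mem_lcsIdeal k)
    a (lcs_le_lcsIdeal _ hw)
end

section
/- With B = A ⊗ E the tensor product of an associative algebra A with the exterior algebra E on k generators, there is the decomposition [B,[B,B]] = [A,[A,A]] ⊗ (E^0 ⊕ E^1) + A[A,A] ⊗ E_+^{≥2} + [A,A] ⊗ E_−^{≥3}, where the three summands intersect pairwise trivially. -/
open TensorProduct

/-- The exterior (Grassmann) algebra over ℂ on `k` generators. -/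
abbrev ExtAlg (k : ℕ) := ExteriorAlgebra ℂ (Fin k → ℂ)

/-- The degree-`i` graded component `E^i` of the exterior algebra. -/
noncomputable def Egrade (k i : ℕ) : Submodule ℂ (ExtAlg k) :=
  LinearMap.range (ExteriorAlgebra.ι ℂ : (Fin k → ℂ) →ₗ[ℂ] ExtAlg k) ^ i

/-- `E_− = ⊕_{i odd} E^i`. -/
noncomputable def Eodd (k : ℕ) : Submodule ℂ (ExtAlg k) := ⨆ i ∈ {i : ℕ | Odd i}, Egrade k i

/-- `E_+^{≥2} = ⊕_{i even, i ≥ 2} E^i`. -/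
noncomputable def EevenGe2 (k : ℕ) : Submodule ℂ (ExtAlg k) :=
  ⨆ i ∈ {i : ℕ | Even i ∧ 2 ≤ i}, Egrade k i

/-- `E_−^{≥3} = ⊕_{i odd, i ≥ 3} E^i`. -/
noncomputable def EoddGe3 (k : ℕ) : Submodule ℂ (ExtAlg k) :=
  ⨆ i ∈ {i : ℕ | Odd i ∧ 3 ≤ i}, Egrade k i

/-- `E_+^{≥4} = ⊕_{i even, i ≥ 4} E^i`. -/
noncomputable def EevenGe4 (k : ℕ) : Submodule ℂ (ExtAlg k) :=
  ⨆ i ∈ {i : ℕ | Even i ∧ 4 ≤ i}, Egrade k i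

/-- `[X,Y]`: the ℂ-span of all commutators `[x,y] = xy − yx`, `x ∈ X`, `y ∈ Y`. -/
noncomputable def commS {B : Type*} [Ring B] [Algebra ℂ B] (X Y : Submodule ℂ B) : Submodule ℂ B :=
  Submodule.span ℂ {z | ∃ x ∈ X, ∃ y ∈ Y, z = x * y - y * x}

/-- `U ⊗ F`: the ℂ-span of the pure tensors `u ⊗ f`, `u ∈ U`, `f ∈ F`, inside `A ⊗ E`. -/
noncomputable def tenS {A : Type*} [Ring A] [Algebra ℂ A] {k : ℕ}
    (U : Submodule ℂ A) (F : Submodule ℂ (ExtAlg k)) : Submodule ℂ (A ⊗[ℂ] ExtAlg k) :=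
  Submodule.span ℂ {z | ∃ u ∈ U, ∃ f ∈ F, z = u ⊗ₜ[ℂ] f}

/-! `B` is spanned by pure tensors `a ⊗ e` with `e` homogeneous, and supercommutativity of `E`
gives `[a ⊗ e, b ⊗ f] = (ab - (-1)^(ij) ba) ⊗ ef` for `e ∈ E^i`, `f ∈ E^j`. So `[B,[B,B]]` is
spanned by the elements `(ay ∓ ya) ⊗ efg` with `y = bc ∓ cb`, and the parities of the degrees
decide which summand each one lies in. Conversely, odd elements of `E` turn anticommutators into
commutators, e.g. `2 y ⊗ eh = [y ⊗ e, 1 ⊗ h]` for `e, h` of odd degree, and this realises each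
summand inside `[B,[B,B]]`. The summands live over different graded pieces of `E`, and over a
field, tensoring with `A` keeps disjoint subspaces disjoint. -/

section ExteriorGrading

variable {k : ℕ}

lemma Egrade_mul_mem {i j : ℕ} {e f : ExtAlg k} (he : e ∈ Egrade k i) (hf : f ∈ Egrade k j) :
    e * f ∈ Egrade k (i + j) := by
  rw [Egrade, pow_add]
  exact Submodule.mul_mem_mul he hf

lemma Egrade_succ (n : ℕ) : Egrade k (n + 1) = Egrade k 1 * Egrade k n := by
  rw [Egrade, Egrade, Egrade, pow_succ', pow_one]

lemma mul_ι_of_mem_Egrade (m : Fin k → ℂ) {j : ℕ} {f : ExtAlg k} (hf : f ∈ Egrade k j) :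
    f * ExteriorAlgebra.ι ℂ m = (-1 : ℂ) ^ j • (ExteriorAlgebra.ι ℂ m * f) := by
  induction hf using Submodule.pow_induction_on_left' with
  | algebraMap r => rw [pow_zero, one_smul, Algebra.commutes]
  | add x y i _ _ ihx ihy => rw [add_mul, ihx, ihy, mul_add, smul_add]
  | mem_mul v hv i x _ ih =>
    obtain ⟨n, rfl⟩ := hv
    have hswap : ExteriorAlgebra.ι ℂ n * ExteriorAlgebra.ι ℂ m
        = -(ExteriorAlgebra.ι ℂ m * ExteriorAlgebra.ι ℂ n) :=
      eq_neg_of_add_eq_zero_left (ExteriorAlgebra.ι_add_mul_swap n m)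
    rw [mul_assoc, ih, mul_smul_comm, ← mul_assoc, hswap, neg_mul, mul_assoc, smul_neg,
      pow_succ, mul_neg_one, neg_smul]

lemma mul_comm_of_mem_Egrade {i j : ℕ} {e f : ExtAlg k} (he : e ∈ Egrade k i)
    (hf : f ∈ Egrade k j) : f * e = (-1 : ℂ) ^ (i * j) • (e * f) := by
  induction he using Submodule.pow_induction_on_left' with
  | algebraMap r => rw [zero_mul, pow_zero, one_smul, Algebra.commutes]
  | add x y i _ _ ihx ihy => rw [mul_add, ihx, ihy, add_mul, smul_add]
  | mem_mul v hv i x _ ih =>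
    obtain ⟨m, rfl⟩ := hv
    rw [← mul_assoc, mul_ι_of_mem_Egrade m hf, smul_mul_assoc, mul_assoc, ih, mul_smul_comm,
      smul_smul, ← pow_add, ← mul_assoc]
    congr 2
    rw [Nat.succ_eq_add_one]
    ring

lemma Egrade_iSupIndep : iSupIndep (Egrade k) :=
  (DirectSum.Decomposition.isInternal fun i : ℕ ↦ ⋀[ℂ]^i (Fin k → ℂ)).submodule_iSupIndep

lemma span_homogeneous_tmul_eq_top (A : Type*) [Ring A] [Algebra ℂ A] :
    Submodule.span ℂ {z : A ⊗[ℂ] ExtAlg k | ∃ a i e, e ∈ Egrade k i ∧ z = a ⊗ₜ[ℂ] e} = ⊤ := by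
  rw [eq_top_iff, ← TensorProduct.span_tmul_eq_top, Submodule.span_le]
  rintro _ ⟨a, e, rfl⟩
  induction e using DirectSum.Decomposition.inductionOn fun i : ℕ ↦ ⋀[ℂ]^i (Fin k → ℂ) with
  | zero => simp
  | homogeneous e => exact Submodule.subset_span ⟨a, _, e, e.2, rfl⟩
  | add e e' he he' => rw [tmul_add]; exact add_mem he he'

end ExteriorGrading

section Commutators

variable {C : Type*} [Ring C] [Algebra ℂ C]

lemma commutator_mem_commS {X Y : Submodule ℂ C} {x y : C} (hx : x ∈ X) (hy : y ∈ Y) :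
    x * y - y * x ∈ commS X Y :=
  Submodule.subset_span ⟨x, hx, y, hy, rfl⟩

lemma commS_span_span (s t : Set C) :
    commS (Submodule.span ℂ s) (Submodule.span ℂ t)
      = Submodule.span ℂ (Set.image2 (fun x y ↦ x * y - y * x) s t) := by
  have hmap₂ (X Y : Submodule ℂ C) :
      commS X Y = Submodule.map₂ (LinearMap.mul ℂ C - (LinearMap.mul ℂ C).flip) X Y := by
    rw [Submodule.map₂_eq_span_image2, commS]
    congr 1
    ext z
    simp [Set.image2, eq_comm]
  rw [hmap₂, Submodule.map₂_span_span]
  rfl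

lemma Submodule.le_top_mul (P : Submodule ℂ C) : P ≤ ⊤ * P :=
  calc P = 1 * P := (one_mul P).symm
    _ ≤ ⊤ * P := mul_le_mul' le_top le_rfl

lemma mul_mem_top_mul_commS {w : C} (hw : w ∈ commS ⊤ ⊤) (x : C) :
    w * x ∈ ⊤ * commS (⊤ : Submodule ℂ C) ⊤ := by
  rw [← add_sub_cancel (x * w) (w * x)]
  exact add_mem (Submodule.mul_mem_mul Submodule.mem_top hw)
    (Submodule.le_top_mul _ (commutator_mem_commS Submodule.mem_top Submodule.mem_top))

lemma sign_commutator_mem_commS {Y : Submodule ℂ C} (a : C) {y : C} (hy : y ∈ Y) {n : ℕ}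
    (hn : Even n) : a * y - (-1 : ℂ) ^ n • (y * a) ∈ commS ⊤ Y := by
  rw [hn.neg_one_pow, one_smul]
  exact commutator_mem_commS Submodule.mem_top hy

lemma sign_commutator_mem_top_mul_commS (a y : C) {n : ℕ} (hy : Odd n → y ∈ commS ⊤ ⊤) :
    a * y - (-1 : ℂ) ^ n • (y * a) ∈ ⊤ * commS (⊤ : Submodule ℂ C) ⊤ := by
  rcases Nat.even_or_odd n with hn | hn
  · exact Submodule.le_top_mul _ (sign_commutator_mem_commS a Submodule.mem_top hn)
  · rw [hn.neg_one_pow, neg_one_smul, sub_neg_eq_add]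
    exact add_mem (Submodule.mul_mem_mul Submodule.mem_top (hy hn))
      (mul_mem_top_mul_commS (hy hn) a)

end Commutators

section TensorProduct

variable {A : Type*} [Ring A] [Algebra ℂ A] {k : ℕ}

lemma tmul_commutator_tmul (a b : A) {i j : ℕ} {e f : ExtAlg k} (he : e ∈ Egrade k i)
    (hf : f ∈ Egrade k j) :
    (a ⊗ₜ[ℂ] e) * (b ⊗ₜ[ℂ] f) - (b ⊗ₜ[ℂ] f) * (a ⊗ₜ[ℂ] e)
      = (a * b - (-1 : ℂ) ^ (i * j) • (b * a)) ⊗ₜ[ℂ] (e * f) := by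
  rw [Algebra.TensorProduct.tmul_mul_tmul, Algebra.TensorProduct.tmul_mul_tmul,
    mul_comm_of_mem_Egrade he hf, tmul_smul, smul_tmul', sub_tmul]

lemma tmul_mem_commS_top {W : Submodule ℂ A} {Q : Submodule ℂ (A ⊗[ℂ] ExtAlg k)} {e : ExtAlg k}
    (h : ∀ w ∈ W, w ⊗ₜ[ℂ] e ∈ Q) {u : A} (hu : u ∈ commS ⊤ W) : u ⊗ₜ[ℂ] e ∈ commS ⊤ Q := by
  refine (Submodule.span_le.2 ?_ :
    commS ⊤ W ≤ (commS ⊤ Q).comap ((TensorProduct.mk ℂ A _).flip e)) hu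
  rintro _ ⟨x, -, w, hw, rfl⟩
  have hcomm : (x ⊗ₜ[ℂ] (1 : ExtAlg k)) * (w ⊗ₜ[ℂ] e) - (w ⊗ₜ[ℂ] e) * (x ⊗ₜ[ℂ] 1)
      = (x * w - w * x) ⊗ₜ[ℂ] e := by
    rw [Algebra.TensorProduct.tmul_mul_tmul, Algebra.TensorProduct.tmul_mul_tmul, one_mul,
      mul_one, sub_tmul]
  show (x * w - w * x) ⊗ₜ[ℂ] e ∈ commS ⊤ Q
  rw [← hcomm]
  exact commutator_mem_commS Submodule.mem_top (h w hw)

lemma tmul_mem_commS_of_mem {w : A} (hw : w ∈ commS ⊤ ⊤) (e : ExtAlg k) :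
    w ⊗ₜ[ℂ] e ∈ commS (⊤ : Submodule ℂ (A ⊗[ℂ] ExtAlg k)) ⊤ :=
  tmul_mem_commS_top (fun _ _ ↦ Submodule.mem_top) hw

lemma tmul_mem_commS_commS_of_mem {u : A} (hu : u ∈ commS ⊤ (commS ⊤ ⊤)) (e : ExtAlg k) :
    u ⊗ₜ[ℂ] e ∈ commS (⊤ : Submodule ℂ (A ⊗[ℂ] ExtAlg k)) (commS ⊤ ⊤) :=
  tmul_mem_commS_top (fun _ hw ↦ tmul_mem_commS_of_mem hw e) hu

lemma tmul_mem_commS_of_even (y : A) {m : ℕ} (hm : Even m) (hm2 : 2 ≤ m) {q : ExtAlg k}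
    (hq : q ∈ Egrade k m) : y ⊗ₜ[ℂ] q ∈ commS (⊤ : Submodule ℂ (A ⊗[ℂ] ExtAlg k)) ⊤ := by
  obtain ⟨n, rfl⟩ : ∃ n, m = n + 1 := ⟨m - 1, by omega⟩
  have hn : Odd n := Nat.not_even_iff_odd.mp (Nat.even_add_one.mp hm)
  rw [Egrade_succ] at hq
  refine Submodule.mul_induction_on hq (fun g hg h hh ↦ ?_) fun _ _ h₁ h₂ ↦ ?_
  · have hcomm := tmul_commutator_tmul y 1 hg hh
    rw [one_mul, mul_one, one_mul, hn.neg_one_pow, neg_one_smul, sub_neg_eq_add] at hcomm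
    have hhalf : y ⊗ₜ[ℂ] (g * h) = (2 : ℂ)⁻¹ • ((y + y) ⊗ₜ[ℂ] (g * h)) := by
      rw [← two_smul ℂ y, smul_tmul', smul_smul, inv_mul_cancel₀ two_ne_zero, one_smul]
    rw [hhalf, ← hcomm]
    exact Submodule.smul_mem _ _ (commutator_mem_commS Submodule.mem_top Submodule.mem_top)
  · rw [tmul_add]
    exact add_mem h₁ h₂

lemma mul_tmul_mul_mem_commS_commS (x : A) {w : A} (hw : w ∈ commS ⊤ ⊤) {j : ℕ} (hj : Odd j)
    {g q : ExtAlg k} (hg : g ∈ Egrade k 1) (hq : q ∈ Egrade k j) :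
    (x * w) ⊗ₜ[ℂ] (g * q) ∈ commS (⊤ : Submodule ℂ (A ⊗[ℂ] ExtAlg k)) (commS ⊤ ⊤) := by
  have hsum : (x * w + w * x) ⊗ₜ[ℂ] (g * q) ∈
      commS (⊤ : Submodule ℂ (A ⊗[ℂ] ExtAlg k)) (commS ⊤ ⊤) := by
    have hcomm := tmul_commutator_tmul x w hg hq
    rw [one_mul, hj.neg_one_pow, neg_one_smul, sub_neg_eq_add] at hcomm
    rw [← hcomm]
    exact commutator_mem_commS Submodule.mem_top (tmul_mem_commS_of_mem hw q)
  have hdiff : (x * w - w * x) ⊗ₜ[ℂ] (g * q) ∈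
      commS (⊤ : Submodule ℂ (A ⊗[ℂ] ExtAlg k)) (commS ⊤ ⊤) :=
    tmul_mem_commS_commS_of_mem (commutator_mem_commS Submodule.mem_top hw) _
  have hhalf : (x * w) ⊗ₜ[ℂ] (g * q)
      = (2 : ℂ)⁻¹ • ((x * w + w * x) ⊗ₜ[ℂ] (g * q) + (x * w - w * x) ⊗ₜ[ℂ] (g * q)) := by
    rw [← add_tmul, smul_tmul']
    congr 1
    module
  rw [hhalf]
  exact Submodule.smul_mem _ _ (add_mem hsum hdiff)

lemma commutator_tmul_mul_mem_commS_commS {u : A} (hu : u ∈ commS ⊤ ⊤) {m : ℕ} (hm : Even m)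
    (hm2 : 2 ≤ m) {g q : ExtAlg k} (hg : g ∈ Egrade k 1) (hq : q ∈ Egrade k m) :
    u ⊗ₜ[ℂ] (g * q) ∈ commS (⊤ : Submodule ℂ (A ⊗[ℂ] ExtAlg k)) (commS ⊤ ⊤) := by
  induction hu using Submodule.span_induction with
  | mem _ hu =>
    obtain ⟨x, -, y, -, rfl⟩ := hu
    have hcomm := tmul_commutator_tmul x y hg hq
    rw [one_mul, hm.neg_one_pow, one_smul] at hcomm
    rw [← hcomm]
    exact commutator_mem_commS Submodule.mem_top (tmul_mem_commS_of_even y hm hm2 hq)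
  | zero => rw [zero_tmul]; exact zero_mem _
  | add _ _ _ _ h₁ h₂ => rw [add_tmul]; exact add_mem h₁ h₂
  | smul c _ _ h => rw [← smul_tmul']; exact Submodule.smul_mem _ c h

lemma tenS_biSup_le {U : Submodule ℂ A} {s : Set ℕ} {P : Submodule ℂ (A ⊗[ℂ] ExtAlg k)}
    (h : ∀ i ∈ s, ∀ u ∈ U, ∀ f ∈ Egrade k i, u ⊗ₜ[ℂ] f ∈ P) :
    tenS U (⨆ i ∈ s, Egrade k i) ≤ P := by
  refine Submodule.span_le.2 ?_
  rintro _ ⟨u, hu, f, hf, rfl⟩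
  exact (iSup₂_le fun i hi f hf ↦ h i hi u hu f hf :
    (⨆ i ∈ s, Egrade k i) ≤ P.comap (TensorProduct.mk ℂ A (ExtAlg k) u)) hf

lemma tenS_commS_commS_le (F : Submodule ℂ (ExtAlg k)) :
    tenS (commS (⊤ : Submodule ℂ A) (commS ⊤ ⊤)) F ≤ commS ⊤ (commS ⊤ ⊤) := by
  refine Submodule.span_le.2 ?_
  rintro _ ⟨u, hu, f, -, rfl⟩
  exact tmul_mem_commS_commS_of_mem hu f

lemma tenS_top_mul_commS_le :
    tenS ((⊤ : Submodule ℂ A) * commS ⊤ ⊤) (EevenGe2 k) ≤ commS ⊤ (commS ⊤ ⊤) := by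
  refine tenS_biSup_le fun i ⟨hi, hi2⟩ u hu f hf ↦ ?_
  obtain ⟨n, rfl⟩ : ∃ n, i = n + 1 := ⟨i - 1, by omega⟩
  have hn : Odd n := Nat.not_even_iff_odd.mp (Nat.even_add_one.mp hi)
  rw [Egrade_succ] at hf
  refine Submodule.mul_induction_on hu (fun x _ w hw ↦ ?_) fun _ _ h₁ h₂ ↦ ?_
  · refine Submodule.mul_induction_on hf
      (fun g hg q hq ↦ mul_tmul_mul_mem_commS_commS x hw hn hg hq) fun _ _ h₁ h₂ ↦ ?_
    rw [tmul_add]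
    exact add_mem h₁ h₂
  · rw [add_tmul]
    exact add_mem h₁ h₂

lemma tenS_commS_le :
    tenS (commS (⊤ : Submodule ℂ A) ⊤) (EoddGe3 k) ≤ commS ⊤ (commS ⊤ ⊤) := by
  refine tenS_biSup_le fun i ⟨hi, hi3⟩ u hu f hf ↦ ?_
  obtain ⟨n, rfl⟩ : ∃ n, i = n + 1 := ⟨i - 1, by omega⟩
  have hn : Even n := by
    obtain ⟨r, hr⟩ := hi
    exact ⟨r, by omega⟩
  rw [Egrade_succ] at hf
  refine Submodule.mul_induction_on hf
    (fun g hg q hq ↦ commutator_tmul_mul_mem_commS_commS hu hn (by omega) hg hq) fun _ _ h₁ h₂ ↦ ?_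
  rw [tmul_add]
  exact add_mem h₁ h₂

variable (A k) in
noncomputable def commDecomp : Submodule ℂ (A ⊗[ℂ] ExtAlg k) :=
  tenS (commS (⊤ : Submodule ℂ A) (commS ⊤ ⊤)) (Egrade k 0 ⊔ Egrade k 1)
    ⊔ tenS ((⊤ : Submodule ℂ A) * commS ⊤ ⊤) (EevenGe2 k)
    ⊔ tenS (commS (⊤ : Submodule ℂ A) ⊤) (EoddGe3 k)

lemma tmul_mem_commDecomp {m : ℕ} {w : A} {p : ExtAlg k} (hp : p ∈ Egrade k m)
    (h₁ : m ≤ 1 → w ∈ commS ⊤ (commS ⊤ ⊤)) (h₂ : w ∈ ⊤ * commS ⊤ ⊤)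
    (h₃ : Odd m → w ∈ commS ⊤ ⊤) : w ⊗ₜ[ℂ] p ∈ commDecomp A k := by
  have tmul_mem {U : Submodule ℂ A} {F : Submodule ℂ (ExtAlg k)} (hw : w ∈ U) (hp : p ∈ F) :
      w ⊗ₜ[ℂ] p ∈ tenS U F :=
    Submodule.subset_span ⟨w, hw, p, hp, rfl⟩
  rcases Nat.lt_or_ge m 2 with hm | hm
  · refine Submodule.mem_sup_left (Submodule.mem_sup_left (tmul_mem (h₁ (by omega)) ?_))
    obtain rfl | rfl : m = 0 ∨ m = 1 := by omega
    exacts [Submodule.mem_sup_left hp, Submodule.mem_sup_right hp]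
  rcases Nat.even_or_odd m with he | ho
  · refine Submodule.mem_sup_left (Submodule.mem_sup_right (tmul_mem h₂ ?_))
    exact Submodule.mem_iSup_of_mem m (Submodule.mem_iSup_of_mem ⟨he, hm⟩ hp)
  · refine Submodule.mem_sup_right (tmul_mem (h₃ ho) ?_)
    have hm3 : 3 ≤ m := by rcases ho with ⟨r, rfl⟩; omega
    exact Submodule.mem_iSup_of_mem m (Submodule.mem_iSup_of_mem ⟨ho, hm3⟩ hp)

lemma doubleCommutator_tmul_mem_commDecomp (a b c : A) {i j l : ℕ} {e f g : ExtAlg k}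
    (he : e ∈ Egrade k i) (hf : f ∈ Egrade k j) (hg : g ∈ Egrade k l) :
    (a ⊗ₜ[ℂ] e) * ((b ⊗ₜ[ℂ] f) * (c ⊗ₜ[ℂ] g) - (c ⊗ₜ[ℂ] g) * (b ⊗ₜ[ℂ] f))
      - ((b ⊗ₜ[ℂ] f) * (c ⊗ₜ[ℂ] g) - (c ⊗ₜ[ℂ] g) * (b ⊗ₜ[ℂ] f)) * (a ⊗ₜ[ℂ] e)
      ∈ commDecomp A k := by
  rw [tmul_commutator_tmul b c hf hg, tmul_commutator_tmul a _ he (Egrade_mul_mem hf hg)]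
  refine tmul_mem_commDecomp (Egrade_mul_mem he (Egrade_mul_mem hf hg)) (fun hm ↦ ?_)
    (sign_commutator_mem_top_mul_commS a _ fun hodd ↦ ?_) fun hodd ↦ ?_
  · have hjl : Even (j * l) := by
      rcases (by omega : j = 0 ∨ l = 0) with h | h <;> simp [h]
    have hijl : Even (i * (j + l)) := by
      rcases (by omega : i = 0 ∨ j + l = 0) with h | h <;> simp [h]
    exact sign_commutator_mem_commS a (sign_commutator_mem_commS b Submodule.mem_top hjl) hijl
  · have hjl : Even (j * l) := by
      simp only [← Nat.not_even_iff_odd, Nat.even_mul, Nat.even_add] at hodd ⊢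
      tauto
    exact sign_commutator_mem_commS b Submodule.mem_top hjl
  · have hijl : Even (i * (j + l)) := by
      simp only [← Nat.not_even_iff_odd, Nat.even_mul, Nat.even_add] at hodd ⊢
      tauto
    exact sign_commutator_mem_commS a Submodule.mem_top hijl

lemma commS_top_commS_le_commDecomp :
    commS ⊤ (commS ⊤ ⊤) ≤ commDecomp A k := by
  rw [← span_homogeneous_tmul_eq_top, commS_span_span, commS_span_span, Submodule.span_le]
  rintro _ ⟨_, ⟨a, i, e, he, rfl⟩, _, ⟨_, ⟨b, j, f, hf, rfl⟩, _, ⟨c, l, g, hg, rfl⟩, rfl⟩, rfl⟩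
  exact doubleCommutator_tmul_mem_commDecomp a b c he hf hg

lemma disjoint_tenS {U V : Submodule ℂ A} {F G : Submodule ℂ (ExtAlg k)} (h : Disjoint F G) :
    Disjoint (tenS U F) (tenS V G) := by
  obtain ⟨C, hGC, hC⟩ := h.symm.exists_isCompl
  set π := (F.subtype ∘ₗ F.projectionOnto C hC.symm).lTensor A
  have hF : tenS U F ≤ LinearMap.eqLocus π LinearMap.id := by
    refine Submodule.span_le.2 ?_
    rintro _ ⟨u, -, f, hf, rfl⟩
    simp [π, Submodule.projectionOnto_apply_left hC.symm ⟨f, hf⟩]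
  have hG : tenS V G ≤ LinearMap.ker π := by
    refine Submodule.span_le.2 ?_
    rintro _ ⟨u, -, f, hf, rfl⟩
    simp [π, Submodule.projectionOnto_apply_right hC.symm ⟨f, hGC hf⟩]
  refine Submodule.disjoint_def.2 fun z hzF hzG ↦ ?_
  have hπz : π z = z := hF hzF
  rw [← hπz, LinearMap.mem_ker.1 (hG hzG)]

end TensorProduct

/-- with `B = A ⊗ E`,
`[B,[B,B]] = [A,[A,A]] ⊗ (E^0 ⊕ E^1) + A[A,A] ⊗ E_+^{≥2} + [A,A] ⊗ E_−^{≥3}`,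
and the three summands intersect pairwise trivially. -/
theorem stmt_15 (A : Type*) [Ring A] [Algebra ℂ A] (k : ℕ) :
    letI S₁ := tenS (commS (⊤ : Submodule ℂ A) (commS ⊤ ⊤)) (Egrade k 0 ⊔ Egrade k 1)
    letI S₂ := tenS ((⊤ : Submodule ℂ A) * commS ⊤ ⊤) (EevenGe2 k)
    letI S₃ := tenS (commS (⊤ : Submodule ℂ A) ⊤) (EoddGe3 k)
    commS (⊤ : Submodule ℂ (A ⊗[ℂ] ExtAlg k)) (commS ⊤ ⊤) = S₁ + S₂ + S₃
      ∧ S₁ ⊓ S₂ = ⊥ ∧ S₁ ⊓ S₃ = ⊥ ∧ S₂ ⊓ S₃ = ⊥ := by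
  have disjoint_grades {s t : Set ℕ} (hst : Disjoint s t) {U V : Submodule ℂ A} :
      tenS U (⨆ i ∈ s, Egrade k i) ⊓ tenS V (⨆ i ∈ t, Egrade k i) = ⊥ :=
    disjoint_iff.mp (disjoint_tenS (Egrade_iSupIndep.disjoint_biSup_biSup hst))
  have disjoint_low {t : Set ℕ} (ht : ∀ i ∈ t, 2 ≤ i) {U V : Submodule ℂ A} :
      tenS U (Egrade k 0 ⊔ Egrade k 1) ⊓ tenS V (⨆ i ∈ t, Egrade k i) = ⊥ := by
    rw [← iSup_pair (f := Egrade k)]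
    refine disjoint_grades (Set.disjoint_left.2 fun i hi hit ↦ ?_)
    have := ht i hit
    rcases hi with rfl | rfl <;> omega
  refine ⟨le_antisymm commS_top_commS_le_commDecomp ?_, disjoint_low fun i hi ↦ hi.2,
    disjoint_low fun i hi ↦ by have := hi.2; omega, ?_⟩
  · exact sup_le (sup_le (tenS_commS_commS_le _) tenS_top_mul_commS_le) tenS_commS_le
  · exact disjoint_grades (Set.disjoint_left.2 fun i hi hi' ↦
      Nat.not_even_iff_odd.mpr hi'.1 hi.1)
end

section
/- With B = A ⊗ E the tensor product of an associative algebra A with the exterior algebra E on k generators, there is the decomposition [B,[B,[B,B]]] = [A,[A,[A,A]]] ⊗ (E^0 ⊕ E^1) + ([A,A[A,A]] + A[A,[A,A]]) ⊗ E^2 + [A,A[A,A]] ⊗ E_−^{≥3} + A[A,A] ⊗ E_+^{≥4}, where E_+^{≥4} = ⊕_{i even, i ≥ 4} E^i. -/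
/-!
The exterior algebra is graded commutative: `g f = (-1)^{pq} f g` for `f ∈ E^p`, `g ∈ E^q`. Hence
`[u ⊗ f, v ⊗ g] = (uv - (-1)^{pq} vu) ⊗ fg`, and since `E^p E^q = E^{p+q}`, the commutator of
`⨁ₙ Cₙ ⊗ E^n` and `⨁ₙ Dₙ ⊗ E^n` is `⨁ₙ Xₙ ⊗ E^n`, where `Xₙ` is the sum over `p + q = n` of
`[C_p, D_q]` for `pq` even and of `{C_p, D_q}` for `pq` odd. Starting from `B = ⨁ₙ A ⊗ E^n`,
three rounds of this give the coefficients of `[B,B]`, `[B,[B,B]]` and `[B,[B,[B,B]]]`. Identifying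
them only needs `[A,A]A ⊆ A[A,A]` (Leibniz rule) and `AX ⊆ {A,X} + [A,X]` (`2` is invertible).
-/

open TensorProduct

section Commutators

variable {B : Type*} [Ring B] [Algebra ℂ B]

noncomputable def superCommutator (s : ℂ) : B →ₗ[ℂ] B →ₗ[ℂ] B :=
  LinearMap.mul ℂ B - s • (LinearMap.mul ℂ B).flip

@[simp] lemma superCommutator_apply (s : ℂ) (x y : B) :
    superCommutator s x y = x * y - s • (y * x) := rfl

lemma commS_eq_map₂ (X Y : Submodule ℂ B) :
    commS X Y = Submodule.map₂ (superCommutator 1) X Y := by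
  rw [Submodule.map₂_eq_span_image2, commS]
  congr 1
  ext z
  simp only [Set.mem_ofPred_eq, Set.mem_image2, SetLike.mem_coe, superCommutator_apply, one_smul]
  constructor <;> rintro ⟨x, hx, y, hy, h⟩ <;> exact ⟨x, hx, y, hy, h.symm⟩

noncomputable def acommS (X Y : Submodule ℂ B) : Submodule ℂ B :=
  Submodule.map₂ (superCommutator (-1)) X Y

noncomputable def superCommS (U V : Submodule ℂ B) (p q : ℕ) : Submodule ℂ B :=
  Submodule.map₂ (superCommutator ((-1 : ℂ) ^ (p * q))) U V

lemma superCommS_of_even {p q : ℕ} (h : Even (p * q)) (U V : Submodule ℂ B) :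
    superCommS U V p q = commS U V := by
  rw [superCommS, h.neg_one_pow, commS_eq_map₂]

lemma superCommS_of_odd {p q : ℕ} (h : Odd (p * q)) (U V : Submodule ℂ B) :
    superCommS U V p q = acommS U V := by
  rw [superCommS, h.neg_one_pow, acommS]

variable {X X' Y Y' Z : Submodule ℂ B}

lemma mem_commS {x y : B} (hx : x ∈ X) (hy : y ∈ Y) : x * y - y * x ∈ commS X Y :=
  Submodule.subset_span ⟨x, hx, y, hy, rfl⟩

lemma mem_acommS {x y : B} (hx : x ∈ X) (hy : y ∈ Y) : x * y + y * x ∈ acommS X Y := by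
  simpa [acommS] using Submodule.apply_mem_map₂ (superCommutator (-1)) hx hy

lemma commS_le (h : ∀ x ∈ X, ∀ y ∈ Y, x * y - y * x ∈ Z) : commS X Y ≤ Z :=
  Submodule.span_le.2 fun _ ⟨x, hx, y, hy, hz⟩ => hz ▸ h x hx y hy

lemma acommS_le (h : ∀ x ∈ X, ∀ y ∈ Y, x * y + y * x ∈ Z) : acommS X Y ≤ Z :=
  Submodule.map₂_le.2 fun x hx y hy => by simpa using h x hx y hy

lemma commS_mono (hX : X ≤ X') (hY : Y ≤ Y') : commS X Y ≤ commS X' Y' :=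
  commS_le fun _ hx _ hy => mem_commS (hX hx) (hY hy)

lemma commS_le_mul_sup_mul (X Y : Submodule ℂ B) : commS X Y ≤ X * Y ⊔ Y * X :=
  commS_le fun _ hx _ hy => sub_mem
    (Submodule.mem_sup_left (Submodule.mul_mem_mul hx hy))
    (Submodule.mem_sup_right (Submodule.mul_mem_mul hy hx))

lemma acommS_le_mul_sup_mul (X Y : Submodule ℂ B) : acommS X Y ≤ X * Y ⊔ Y * X :=
  acommS_le fun _ hx _ hy => add_mem
    (Submodule.mem_sup_left (Submodule.mul_mem_mul hx hy))
    (Submodule.mem_sup_right (Submodule.mul_mem_mul hy hx))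

lemma top_mul_le_acommS_sup_commS (X : Submodule ℂ B) :
    ⊤ * X ≤ acommS ⊤ X ⊔ commS ⊤ X := by
  refine Submodule.mul_le.2 fun a _ x hx => ?_
  have h : a * x = (2 : ℂ)⁻¹ • ((a * x + x * a) + (a * x - x * a)) := by
    rw [add_add_sub_cancel, ← two_smul ℂ, smul_smul, inv_mul_cancel₀ two_ne_zero, one_smul]
  rw [h]
  exact Submodule.smul_mem _ _ (add_mem
    (Submodule.mem_sup_left (mem_acommS Submodule.mem_top hx))
    (Submodule.mem_sup_right (mem_commS Submodule.mem_top hx)))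

lemma le_acommS_top_left (X : Submodule ℂ B) : X ≤ acommS ⊤ X := by
  intro x hx
  have h : x = (2 : ℂ)⁻¹ • (1 * x + x * 1) := by
    rw [one_mul, mul_one, ← two_smul ℂ, smul_smul, inv_mul_cancel₀ two_ne_zero, one_smul]
  rw [h]
  exact Submodule.smul_mem _ _ (mem_acommS Submodule.mem_top hx)

lemma commS_top_mul_le (X Y : Submodule ℂ B) :
    commS ⊤ X * Y ≤ commS ⊤ (X * Y) ⊔ X * commS ⊤ Y := by
  refine Submodule.mul_le.2 fun w hw y hy => ?_
  induction hw using Submodule.span_induction with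
  | mem w hw =>
    obtain ⟨b, -, x, hx, rfl⟩ := hw
    have leibniz : (b * x - x * b) * y = (b * (x * y) - x * y * b) - x * (b * y - y * b) := by
      noncomm_ring
    rw [leibniz]
    exact sub_mem
      (Submodule.mem_sup_left (mem_commS Submodule.mem_top (Submodule.mul_mem_mul hx hy)))
      (Submodule.mem_sup_right (Submodule.mul_mem_mul hx (mem_commS Submodule.mem_top hy)))
  | zero => rw [zero_mul]; exact zero_mem _
  | add a b _ _ ha hb => rw [add_mul]; exact add_mem ha hb
  | smul r a _ ha => rw [smul_mul_assoc]; exact Submodule.smul_mem _ _ ha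

end Commutators

namespace ExteriorAlgebra

variable {R M : Type*} [CommRing R] [AddCommGroup M] [Module R M]

lemma iSup_exteriorPower : ⨆ i, ⋀[R]^i M = ⊤ :=
  (DirectSum.Decomposition.isInternal (fun i : ℕ => ⋀[R]^i M)).submodule_iSup_eq_top

lemma mem_exteriorPower_zero {f : ExteriorAlgebra R M} (hf : f ∈ ⋀[R]^0 M) :
    ∃ r : R, algebraMap R _ r = f := by
  rwa [exteriorPower, pow_zero, Submodule.mem_one] at hf

lemma ι_mul_comm_of_mem_exteriorPower (m : M) {q : ℕ} {f : ExteriorAlgebra R M}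
    (hf : f ∈ ⋀[R]^q M) : ι R m * f = (-1 : R) ^ q • (f * ι R m) := by
  induction q generalizing f with
  | zero =>
    obtain ⟨r, rfl⟩ := mem_exteriorPower_zero hf
    simp [Algebra.commutes]
  | succ n ih =>
    rw [exteriorPower, pow_succ'] at hf
    refine Submodule.mul_induction_on hf (fun a ha b hb => ?_) (fun x y hx hy => ?_)
    · obtain ⟨m', rfl⟩ := ha
      rw [← mul_assoc, eq_neg_of_add_eq_zero_left (ι_add_mul_swap m m'), neg_mul, mul_assoc,
        ih hb, pow_succ, mul_smul, neg_one_smul, smul_neg, mul_smul_comm, mul_assoc]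
    · rw [mul_add, hx, hy, add_mul, smul_add]

lemma mul_comm_of_mem_exteriorPower {p q : ℕ} {e f : ExteriorAlgebra R M}
    (he : e ∈ ⋀[R]^p M) (hf : f ∈ ⋀[R]^q M) : f * e = (-1 : R) ^ (p * q) • (e * f) := by
  induction p generalizing e with
  | zero =>
    obtain ⟨r, rfl⟩ := mem_exteriorPower_zero he
    simp [Algebra.commutes]
  | succ n ih =>
    rw [exteriorPower, pow_succ'] at he
    refine Submodule.mul_induction_on he (fun a ha b hb => ?_) (fun x y hx hy => ?_)
    · obtain ⟨m, rfl⟩ := ha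
      have hfm : f * ι R m = (-1 : R) ^ q • (ι R m * f) := by
        rw [ι_mul_comm_of_mem_exteriorPower m hf, smul_smul, ← pow_add, Even.neg_one_pow ⟨q, rfl⟩,
          one_smul]
      rw [← mul_assoc, hfm, smul_mul_assoc, mul_assoc, ih hb, mul_smul_comm, smul_smul, ← pow_add,
        mul_assoc, Nat.succ_mul, add_comm]
    · rw [mul_add, hx, hy, ← smul_add, ← add_mul]

end ExteriorAlgebra

section TensorGrading

variable {A : Type*} [Ring A] [Algebra ℂ A] {k : ℕ}

lemma tenS_eq_map₂ (U : Submodule ℂ A) (F : Submodule ℂ (ExtAlg k)) :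
    tenS U F = Submodule.map₂ (TensorProduct.mk ℂ A (ExtAlg k)) U F := by
  rw [Submodule.map₂_eq_span_image2, tenS]
  congr 1
  ext z
  simp only [Set.mem_ofPred_eq, Set.mem_image2, SetLike.mem_coe, mk_apply]
  constructor <;> rintro ⟨u, hu, f, hf, h⟩ <;> exact ⟨u, hu, f, hf, h.symm⟩

lemma tenS_mono_left {U U' : Submodule ℂ A} (h : U ≤ U') (F : Submodule ℂ (ExtAlg k)) :
    tenS U F ≤ tenS U' F := by
  simpa only [tenS_eq_map₂] using Submodule.map₂_le_map₂_left h

lemma tenS_mono_right (U : Submodule ℂ A) {F F' : Submodule ℂ (ExtAlg k)} (h : F ≤ F') :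
    tenS U F ≤ tenS U F' := by
  simpa only [tenS_eq_map₂] using Submodule.map₂_le_map₂_right h

lemma tenS_sup_right (U : Submodule ℂ A) (F F' : Submodule ℂ (ExtAlg k)) :
    tenS U (F ⊔ F') = tenS U F ⊔ tenS U F' := by
  simp only [tenS_eq_map₂, Submodule.map₂_sup_right]

lemma tenS_iSup_left {ι : Sort*} (U : ι → Submodule ℂ A) (F : Submodule ℂ (ExtAlg k)) :
    tenS (⨆ i, U i) F = ⨆ i, tenS (U i) F := by
  simp only [tenS_eq_map₂, Submodule.map₂_iSup_left]

lemma tenS_iSup_right {ι : Sort*} (U : Submodule ℂ A) (F : ι → Submodule ℂ (ExtAlg k)) :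
    tenS U (⨆ i, F i) = ⨆ i, tenS U (F i) := by
  simp only [tenS_eq_map₂, Submodule.map₂_iSup_right]

lemma superCommutator_tmul_tmul {p q : ℕ} (u v : A) {f g : ExtAlg k}
    (hf : f ∈ Egrade k p) (hg : g ∈ Egrade k q) :
    superCommutator 1 (u ⊗ₜ[ℂ] f) (v ⊗ₜ[ℂ] g)
      = superCommutator ((-1 : ℂ) ^ (p * q)) u v ⊗ₜ[ℂ] (f * g) := by
  simp only [superCommutator_apply, Algebra.TensorProduct.tmul_mul_tmul, one_smul]
  rw [ExteriorAlgebra.mul_comm_of_mem_exteriorPower hf hg, tmul_smul, smul_tmul', ← sub_tmul]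

lemma commS_tenS_Egrade (U V : Submodule ℂ A) (p q : ℕ) :
    commS (tenS U (Egrade k p)) (tenS V (Egrade k q))
      = tenS (superCommS U V p q) (Egrade k (p + q)) := by
  rw [commS_eq_map₂, tenS_eq_map₂, tenS_eq_map₂, tenS_eq_map₂, superCommS, Egrade, Egrade, Egrade,
    pow_add, Submodule.mul_eq_map₂]
  simp only [Submodule.map₂_eq_span_image2 _ U, Submodule.map₂_eq_span_image2 _ V,
    Submodule.map₂_eq_span_image2 (LinearMap.mul ℂ _), Submodule.map₂_span_span]
  congr 1
  ext z
  simp only [Set.mem_image2, SetLike.mem_coe]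
  constructor
  · rintro ⟨_, ⟨u, hu, f, hf, rfl⟩, _, ⟨v, hv, g, hg, rfl⟩, rfl⟩
    exact ⟨_, ⟨u, hu, v, hv, rfl⟩, f * g, ⟨f, hf, g, hg, rfl⟩,
      (superCommutator_tmul_tmul u v hf hg).symm⟩
  · rintro ⟨_, ⟨u, hu, v, hv, rfl⟩, _, ⟨f, hf, g, hg, rfl⟩, rfl⟩
    exact ⟨_, ⟨u, hu, f, hf, rfl⟩, _, ⟨v, hv, g, hg, rfl⟩, superCommutator_tmul_tmul u v hf hg⟩

variable (k) in
noncomputable def gradedSpan (C : ℕ → Submodule ℂ A) : Submodule ℂ (A ⊗[ℂ] ExtAlg k) :=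
  ⨆ n, tenS (C n) (Egrade k n)

lemma tenS_le_gradedSpan {C : ℕ → Submodule ℂ A} {U : Submodule ℂ A} {n : ℕ} (h : U ≤ C n) :
    tenS U (Egrade k n) ≤ gradedSpan k C :=
  le_iSup_of_le n (tenS_mono_left h _)

noncomputable def superCommConv (C D : ℕ → Submodule ℂ A) (n : ℕ) : Submodule ℂ A :=
  ⨆ p, ⨆ q, ⨆ _ : p + q = n, superCommS (C p) (D q) p q

lemma superCommConv_le {C D : ℕ → Submodule ℂ A} {n : ℕ} {Z : Submodule ℂ A}
    (heven : ∀ p q, p + q = n → Even (p * q) → commS (C p) (D q) ≤ Z)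
    (hodd : ∀ p q, p + q = n → Odd (p * q) → acommS (C p) (D q) ≤ Z) :
    superCommConv C D n ≤ Z := by
  simp only [superCommConv, iSup_le_iff]
  rintro p q hn
  rcases Nat.even_or_odd (p * q) with h | h
  · exact (superCommS_of_even h _ _).le.trans (heven p q hn h)
  · exact (superCommS_of_odd h _ _).le.trans (hodd p q hn h)

lemma le_superCommConv (C D : ℕ → Submodule ℂ A) {n p q : ℕ} (h : p + q = n) :
    superCommS (C p) (D q) p q ≤ superCommConv C D n :=
  le_iSup₂_of_le p q (le_iSup_of_le h le_rfl)

lemma commS_le_superCommConv (C D : ℕ → Submodule ℂ A) {n : ℕ} (p q : ℕ) (h : p + q = n)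
    (hpq : Even (p * q)) : commS (C p) (D q) ≤ superCommConv C D n :=
  (superCommS_of_even hpq _ _).ge.trans (le_superCommConv C D h)

lemma acommS_le_superCommConv (C D : ℕ → Submodule ℂ A) {n : ℕ} (p q : ℕ) (h : p + q = n)
    (hpq : Odd (p * q)) : acommS (C p) (D q) ≤ superCommConv C D n :=
  (superCommS_of_odd hpq _ _).ge.trans (le_superCommConv C D h)

lemma top_eq_gradedSpan : (⊤ : Submodule ℂ (A ⊗[ℂ] ExtAlg k)) = gradedSpan k fun _ => ⊤ := by
  rw [gradedSpan, ← tenS_iSup_right,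
    show (⨆ n, Egrade k n) = ⊤ from ExteriorAlgebra.iSup_exteriorPower, tenS_eq_map₂,
    TensorProduct.map₂_mk_top_top_eq_top]

lemma commS_gradedSpan (C D : ℕ → Submodule ℂ A) :
    commS (gradedSpan k C) (gradedSpan k D) = gradedSpan k (superCommConv C D) := by
  have hexpand : commS (gradedSpan k C) (gradedSpan k D)
      = ⨆ p, ⨆ q, tenS (superCommS (C p) (D q) p q) (Egrade k (p + q)) := by
    rw [gradedSpan, gradedSpan, commS_eq_map₂, Submodule.map₂_iSup_left]
    refine iSup_congr fun p => ?_
    rw [Submodule.map₂_iSup_right]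
    exact iSup_congr fun q => by rw [← commS_eq_map₂, commS_tenS_Egrade]
  rw [hexpand, gradedSpan]
  refine le_antisymm (iSup₂_le fun p q => le_iSup_of_le (p + q) ?_) (iSup_le fun n => ?_)
  · exact tenS_mono_left (le_superCommConv C D rfl) _
  · simp only [superCommConv, tenS_iSup_left, iSup_le_iff]
    rintro p q rfl
    exact le_iSup₂_of_le p q le_rfl

end TensorGrading

section LowerCentralSeries

variable (B : Type*) [Ring B] [Algebra ℂ B]

-- The terms `[B,B]`, `[B,[B,B]]`, `[B,[B,[B,B]]]` of the lower central series, and `B[B,B]`,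
-- `B[B,[B,B]]`, `[B,B[B,B]]`.
noncomputable def L2 : Submodule ℂ B := commS ⊤ ⊤
noncomputable def L3 : Submodule ℂ B := commS ⊤ (L2 B)
noncomputable def L4 : Submodule ℂ B := commS ⊤ (L3 B)
noncomputable def AL2 : Submodule ℂ B := ⊤ * L2 B
noncomputable def AL3 : Submodule ℂ B := ⊤ * L3 B
noncomputable def commAL2 : Submodule ℂ B := commS ⊤ (AL2 B)

variable {B}

lemma le_top_mul (X : Submodule ℂ B) : X ≤ ⊤ * X :=
  le_mul_of_one_le_left' le_top

lemma commS_top_le {X Z : Submodule ℂ B} (hl : ⊤ * X ≤ Z) (hr : X * ⊤ ≤ Z) : commS ⊤ X ≤ Z :=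
  (commS_le_mul_sup_mul ⊤ X).trans (sup_le hl hr)

lemma acommS_top_le {X Z : Submodule ℂ B} (hl : ⊤ * X ≤ Z) (hr : X * ⊤ ≤ Z) : acommS ⊤ X ≤ Z :=
  (acommS_le_mul_sup_mul ⊤ X).trans (sup_le hl hr)

lemma L2_le_AL2 : L2 B ≤ AL2 B := le_top_mul _

lemma L3_le_L2 : L3 B ≤ L2 B := commS_mono le_rfl le_top

lemma L2_mul_top_le : L2 B * ⊤ ≤ AL2 B :=
  (commS_top_mul_le ⊤ ⊤).trans (sup_le ((commS_mono le_rfl le_top).trans L2_le_AL2) le_rfl)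

lemma top_mul_le_AL2 {X : Submodule ℂ B} (h : X ≤ AL2 B) : ⊤ * X ≤ AL2 B := by
  calc ⊤ * X ≤ ⊤ * AL2 B := mul_le_mul' le_rfl h
    _ = AL2 B := by rw [AL2, ← mul_assoc, top_unique (le_top_mul ⊤)]

lemma mul_top_le_AL2 {X : Submodule ℂ B} (h : X ≤ AL2 B) : X * ⊤ ≤ AL2 B := by
  calc X * ⊤ ≤ ⊤ * (L2 B * ⊤) := by rw [← mul_assoc]; exact mul_le_mul' h le_rfl
    _ ≤ AL2 B := top_mul_le_AL2 L2_mul_top_le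

lemma commS_top_le_AL2 {X : Submodule ℂ B} (h : X ≤ AL2 B) : commS ⊤ X ≤ AL2 B :=
  commS_top_le (top_mul_le_AL2 h) (mul_top_le_AL2 h)

lemma acommS_top_le_AL2 {X : Submodule ℂ B} (h : X ≤ AL2 B) : acommS ⊤ X ≤ AL2 B :=
  acommS_top_le (top_mul_le_AL2 h) (mul_top_le_AL2 h)

lemma L3_le_AL2 : L3 B ≤ AL2 B := commS_top_le_AL2 L2_le_AL2

lemma commAL2_le_AL2 : commAL2 B ≤ AL2 B := commS_top_le_AL2 le_rfl

lemma L3_le_commAL2 : L3 B ≤ commAL2 B := commS_mono le_rfl L2_le_AL2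

lemma L4_le_commAL2 : L4 B ≤ commAL2 B := commS_mono le_rfl L3_le_AL2

lemma L3_mul_top_le : L3 B * ⊤ ≤ commAL2 B ⊔ AL3 B := by
  refine (commS_top_mul_le (L2 B) ⊤).trans (sup_le ?_ ?_)
  · exact le_sup_of_le_left (commS_mono le_rfl L2_mul_top_le)
  · calc L2 B * L2 B ≤ commS ⊤ (⊤ * L2 B) ⊔ ⊤ * commS ⊤ (L2 B) := commS_top_mul_le ⊤ (L2 B)
      _ = commAL2 B ⊔ AL3 B := rfl

lemma L4_le_commAL2_sup_AL3 : L4 B ≤ commAL2 B ⊔ AL3 B :=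
  commS_top_le le_sup_right L3_mul_top_le

lemma acommS_L3_le_commAL2_sup_AL3 : acommS ⊤ (L3 B) ≤ commAL2 B ⊔ AL3 B :=
  acommS_top_le le_sup_right L3_mul_top_le

end LowerCentralSeries

section Coefficients

variable (A : Type*) [Ring A] [Algebra ℂ A]

-- `gradedLᵢ A n` is the coefficient of `E^n` in the `i`-th term of the lower central series of
-- `A ⊗ E`.
noncomputable def gradedL2 (n : ℕ) : Submodule ℂ A :=
  if Even n ∧ 2 ≤ n then ⊤ else L2 A

noncomputable def gradedL3 (n : ℕ) : Submodule ℂ A :=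
  if n ≤ 1 then L3 A else if Even n then AL2 A else L2 A

noncomputable def gradedL4 (n : ℕ) : Submodule ℂ A :=
  if n ≤ 1 then L4 A else if n = 2 then commAL2 A ⊔ AL3 A else if Even n then AL2 A else commAL2 A

variable {A} {n : ℕ}

lemma gradedL2_of_even (h : Even n) (h2 : 2 ≤ n) : gradedL2 A n = ⊤ := if_pos ⟨h, h2⟩

lemma gradedL2_of_not (h : ¬(Even n ∧ 2 ≤ n)) : gradedL2 A n = L2 A := if_neg h

lemma gradedL3_of_le_one (h : n ≤ 1) : gradedL3 A n = L3 A := if_pos h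

lemma gradedL3_of_even (h : Even n) (h2 : 2 ≤ n) : gradedL3 A n = AL2 A := by
  rw [gradedL3, if_neg (by omega), if_pos h]

lemma gradedL3_of_odd (h : Odd n) (h3 : 3 ≤ n) : gradedL3 A n = L2 A := by
  rw [gradedL3, if_neg (by omega), if_neg (Nat.not_even_iff_odd.2 h)]

lemma gradedL4_of_le_one (h : n ≤ 1) : gradedL4 A n = L4 A := if_pos h

lemma gradedL4_two : gradedL4 A 2 = commAL2 A ⊔ AL3 A := rfl

lemma gradedL4_of_even (h : Even n) (h4 : 4 ≤ n) : gradedL4 A n = AL2 A := by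
  rw [gradedL4, if_neg (by omega), if_neg (by omega), if_pos h]

lemma gradedL4_of_odd (h : Odd n) (h3 : 3 ≤ n) : gradedL4 A n = commAL2 A := by
  rw [gradedL4, if_neg (by omega), if_neg (by omega), if_neg (Nat.not_even_iff_odd.2 h)]

lemma L2_le_gradedL2 (n : ℕ) : L2 A ≤ gradedL2 A n := by
  unfold gradedL2; split_ifs
  exacts [le_top, le_rfl]

lemma L3_le_gradedL3 (n : ℕ) : L3 A ≤ gradedL3 A n := by
  unfold gradedL3; split_ifs
  exacts [le_rfl, L3_le_AL2, L3_le_L2]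

lemma L2_le_gradedL3 (h2 : 2 ≤ n) : L2 A ≤ gradedL3 A n := by
  unfold gradedL3; split_ifs
  exacts [absurd h2 (by omega), L2_le_AL2, le_rfl]

lemma L4_le_gradedL4 (n : ℕ) : L4 A ≤ gradedL4 A n := by
  unfold gradedL4; split_ifs
  exacts [le_rfl, L4_le_commAL2_sup_AL3, L4_le_commAL2.trans commAL2_le_AL2, L4_le_commAL2]

lemma commAL2_le_gradedL4 (h2 : 2 ≤ n) : commAL2 A ≤ gradedL4 A n := by
  unfold gradedL4; split_ifs
  exacts [absurd h2 (by omega), le_sup_left, commAL2_le_AL2, le_rfl]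

lemma L3_le_gradedL4 (h3 : 3 ≤ n) : L3 A ≤ gradedL4 A n :=
  L3_le_commAL2.trans (commAL2_le_gradedL4 (by omega))

lemma acommS_L3_le_gradedL4 (h : Even n) (h2 : 2 ≤ n) : acommS ⊤ (L3 A) ≤ gradedL4 A n := by
  obtain rfl | h4 : n = 2 ∨ 4 ≤ n := by grind
  · exact acommS_L3_le_commAL2_sup_AL3
  · exact (acommS_top_le_AL2 L3_le_AL2).trans (gradedL4_of_even h h4).ge

end Coefficients

section Stages

variable {A : Type*} [Ring A] [Algebra ℂ A]

lemma superCommConv_top_top :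
    superCommConv (fun _ => (⊤ : Submodule ℂ A)) (fun _ => ⊤) = gradedL2 A := by
  funext n
  refine le_antisymm (superCommConv_le ?_ ?_) ?_
  · intro p q _ _
    exact L2_le_gradedL2 n
  · intro p q hn hpq
    rw [gradedL2_of_even (by grind) (by grind)]
    exact le_top
  · by_cases h : Even n ∧ 2 ≤ n
    · rw [gradedL2_of_even h.1 h.2]
      exact (le_acommS_top_left ⊤).trans
        (acommS_le_superCommConv (fun _ => ⊤) (fun _ => ⊤) (n := n) 1 (n - 1) (by omega) (by grind))
    · rw [gradedL2_of_not h]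
      exact commS_le_superCommConv (fun _ => ⊤) (fun _ => ⊤) 0 n (zero_add n) (by simp)

lemma superCommConv_top_gradedL2_le (n : ℕ) :
    superCommConv (fun _ => ⊤) (gradedL2 A) n ≤ gradedL3 A n := by
  refine superCommConv_le (fun p q hn _ => ?_) (fun p q hn hpq => ?_)
  · by_cases hq : Even q ∧ 2 ≤ q
    · rw [gradedL2_of_even hq.1 hq.2]
      exact L2_le_gradedL3 (by omega)
    · rw [gradedL2_of_not hq]
      exact L3_le_gradedL3 n
  · rw [gradedL2_of_not (by grind), gradedL3_of_even (by grind) (by grind)]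
    exact acommS_top_le_AL2 L2_le_AL2

lemma gradedL3_le_superCommConv (n : ℕ) :
    gradedL3 A n ≤ superCommConv (fun _ => ⊤) (gradedL2 A) n := by
  have hL3 : L3 A ≤ superCommConv (fun _ => ⊤) (gradedL2 A) n := by
    have hle := commS_le_superCommConv (fun _ => ⊤) (gradedL2 A) n 0 (add_zero n) (by simp)
    rwa [gradedL2_of_not (by simp)] at hle
  obtain h1 | ⟨h, h2⟩ | ⟨h, h3⟩ : n ≤ 1 ∨ (Even n ∧ 2 ≤ n) ∨ (Odd n ∧ 3 ≤ n) := by grind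
  · rwa [gradedL3_of_le_one h1]
  · rw [gradedL3_of_even h h2]
    refine (top_mul_le_acommS_sup_commS (L2 A)).trans (sup_le ?_ hL3)
    have hle := acommS_le_superCommConv (fun _ => ⊤) (gradedL2 A)
        (n := n) 1 (n - 1) (by omega) (by grind)
    rwa [gradedL2_of_not (by grind)] at hle
  · rw [gradedL3_of_odd h h3]
    have hle := commS_le_superCommConv (fun _ => ⊤) (gradedL2 A)
        (n := n) (n - 2) 2 (by omega) (by simp)
    rwa [gradedL2_of_even even_two le_rfl] at hle

lemma superCommConv_top_gradedL2 :
    superCommConv (fun _ => (⊤ : Submodule ℂ A)) (gradedL2 A) = gradedL3 A :=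
  funext fun n => le_antisymm (superCommConv_top_gradedL2_le n) (gradedL3_le_superCommConv n)

lemma superCommConv_top_gradedL3_le (n : ℕ) :
    superCommConv (fun _ => ⊤) (gradedL3 A) n ≤ gradedL4 A n := by
  refine superCommConv_le (fun p q hn _ => ?_) (fun p q hn hpq => ?_)
  · obtain hq | ⟨hq, hq2⟩ | ⟨hq, hq3⟩ : q ≤ 1 ∨ (Even q ∧ 2 ≤ q) ∨ (Odd q ∧ 3 ≤ q) := by grind
    · rw [gradedL3_of_le_one hq]
      exact L4_le_gradedL4 n
    · rw [gradedL3_of_even hq hq2]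
      exact commAL2_le_gradedL4 (by omega)
    · rw [gradedL3_of_odd hq hq3]
      exact L3_le_gradedL4 (by omega)
  · obtain rfl | hq3 : q = 1 ∨ 3 ≤ q := by grind
    · rw [gradedL3_of_le_one le_rfl]
      exact acommS_L3_le_gradedL4 (by grind) (by grind)
    · rw [gradedL3_of_odd (by grind) hq3, gradedL4_of_even (by grind) (by grind)]
      exact acommS_top_le_AL2 L2_le_AL2

lemma gradedL4_le_superCommConv (n : ℕ) :
    gradedL4 A n ≤ superCommConv (fun _ => ⊤) (gradedL3 A) n := by
  have hL4 : L4 A ≤ superCommConv (fun _ => ⊤) (gradedL3 A) n := by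
    have hle := commS_le_superCommConv (fun _ => ⊤) (gradedL3 A) n 0 (add_zero n) (by simp)
    rwa [gradedL3_of_le_one zero_le_one] at hle
  have hcommAL2 (h2 : 2 ≤ n) : commAL2 A ≤ superCommConv (fun _ => ⊤) (gradedL3 A) n := by
    have hle := commS_le_superCommConv (fun _ => ⊤) (gradedL3 A)
        (n := n) (n - 2) 2 (by omega) (by simp)
    rwa [gradedL3_of_even even_two le_rfl] at hle
  have hacommL3 (h : Even n) (h2 : 2 ≤ n) :
      acommS ⊤ (L3 A) ≤ superCommConv (fun _ => ⊤) (gradedL3 A) n := by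
    have hle := acommS_le_superCommConv (fun _ => ⊤) (gradedL3 A)
        (n := n) (n - 1) 1 (by omega) (by grind)
    rwa [gradedL3_of_le_one le_rfl] at hle
  obtain h1 | rfl | ⟨h, h4⟩ | ⟨h, h3⟩ :
      n ≤ 1 ∨ n = 2 ∨ (Even n ∧ 4 ≤ n) ∨ (Odd n ∧ 3 ≤ n) := by grind
  · rwa [gradedL4_of_le_one h1]
  · rw [gradedL4_two]
    exact sup_le (hcommAL2 le_rfl) ((top_mul_le_acommS_sup_commS (L3 A)).trans
      (sup_le (hacommL3 even_two le_rfl) hL4))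
  · rw [gradedL4_of_even h h4]
    refine (top_mul_le_acommS_sup_commS (L2 A)).trans (sup_le ?_ ?_)
    · have hle := acommS_le_superCommConv (fun _ => ⊤) (gradedL3 A)
          (n := n) (n - 3) 3 (by omega) (by grind)
      rwa [gradedL3_of_odd (by decide) le_rfl] at hle
    · exact (le_acommS_top_left _).trans (hacommL3 h (by omega))
  · rw [gradedL4_of_odd h h3]
    exact hcommAL2 (by omega)

lemma superCommConv_top_gradedL3 :
    superCommConv (fun _ => (⊤ : Submodule ℂ A)) (gradedL3 A) = gradedL4 A :=
  funext fun n => le_antisymm (superCommConv_top_gradedL3_le n) (gradedL4_le_superCommConv n)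

end Stages

lemma gradedSpan_gradedL4 {A : Type*} [Ring A] [Algebra ℂ A] {k : ℕ} :
    gradedSpan k (gradedL4 A) = tenS (L4 A) (Egrade k 0 ⊔ Egrade k 1)
      ⊔ tenS (commAL2 A ⊔ AL3 A) (Egrade k 2) ⊔ tenS (commAL2 A) (EoddGe3 k)
      ⊔ tenS (AL2 A) (EevenGe4 k) := by
  refine le_antisymm (iSup_le fun n => ?_) ?_
  · obtain h1 | rfl | ⟨h, h3⟩ | ⟨h, h4⟩ :
        n ≤ 1 ∨ n = 2 ∨ (Odd n ∧ 3 ≤ n) ∨ (Even n ∧ 4 ≤ n) := by grind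
    · rw [gradedL4_of_le_one h1]
      refine le_sup_of_le_left (le_sup_of_le_left (le_sup_of_le_left (tenS_mono_right _ ?_)))
      interval_cases n
      exacts [le_sup_left, le_sup_right]
    · exact le_sup_of_le_left (le_sup_of_le_left le_sup_right)
    · rw [gradedL4_of_odd h h3]
      exact le_sup_of_le_left (le_sup_of_le_right (tenS_mono_right _ (le_biSup _ ⟨h, h3⟩)))
    · rw [gradedL4_of_even h h4]
      exact le_sup_of_le_right (tenS_mono_right _ (le_biSup _ ⟨h, h4⟩))
  · simp only [sup_le_iff, tenS_sup_right, EoddGe3, EevenGe4, tenS_iSup_right, iSup_le_iff]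
    refine ⟨⟨⟨⟨?_, ?_⟩, ?_⟩, fun n ⟨h, h3⟩ => ?_⟩, fun n ⟨h, h4⟩ => ?_⟩
    · exact tenS_le_gradedSpan (gradedL4_of_le_one zero_le_one).ge
    · exact tenS_le_gradedSpan (gradedL4_of_le_one le_rfl).ge
    · exact tenS_le_gradedSpan gradedL4_two.ge
    · exact tenS_le_gradedSpan (gradedL4_of_odd h h3).ge
    · exact tenS_le_gradedSpan (gradedL4_of_even h h4).ge

/-- with `B = A ⊗ E`,
`[B,[B,[B,B]]] = [A,[A,[A,A]]] ⊗ (E^0 ⊕ E^1) + ([A,A[A,A]] + A[A,[A,A]]) ⊗ E^2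
  + [A,A[A,A]] ⊗ E_−^{≥3} + A[A,A] ⊗ E_+^{≥4}`. -/
theorem stmt_16 (A : Type*) [Ring A] [Algebra ℂ A] (k : ℕ) :
    commS (⊤ : Submodule ℂ (A ⊗[ℂ] ExtAlg k)) (commS ⊤ (commS ⊤ ⊤)) =
      tenS (commS (⊤ : Submodule ℂ A) (commS ⊤ (commS ⊤ ⊤))) (Egrade k 0 ⊔ Egrade k 1)
      + tenS (commS (⊤ : Submodule ℂ A) ((⊤ : Submodule ℂ A) * commS ⊤ ⊤)
            + (⊤ : Submodule ℂ A) * commS (⊤ : Submodule ℂ A) (commS ⊤ ⊤)) (Egrade k 2)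
      + tenS (commS (⊤ : Submodule ℂ A) ((⊤ : Submodule ℂ A) * commS ⊤ ⊤)) (EoddGe3 k)
      + tenS ((⊤ : Submodule ℂ A) * commS (⊤ : Submodule ℂ A) ⊤) (EevenGe4 k) := by
  have hL2 : commS (⊤ : Submodule ℂ (A ⊗[ℂ] ExtAlg k)) ⊤ = gradedSpan k (gradedL2 A) := by
    rw [top_eq_gradedSpan, commS_gradedSpan, superCommConv_top_top]
  have hL3 :
      commS (⊤ : Submodule ℂ (A ⊗[ℂ] ExtAlg k)) (commS ⊤ ⊤) = gradedSpan k (gradedL3 A) := by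
    rw [hL2, top_eq_gradedSpan, commS_gradedSpan, superCommConv_top_gradedL2]
  rw [hL3, top_eq_gradedSpan, commS_gradedSpan, superCommConv_top_gradedL3, gradedSpan_gradedL4]
  rfl
end
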